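/- arXiv:1006.3055 — 5 statements merged into one kernel-verified Lean document; each statement's English description precedes it below -/
import Mathlib

section
/- Let K be a simplicial complex with finitely many faces in a finite-dimensional real vector space, let L be a subcomplex of K, and set X = |K| and Y = |L| ⊆ X. Suppose that X \ Y is dense in X and that Y does not separate any connected open subset of X (i.e., for every connected open subset U of X, the set U \ Y is connected). Then for every basepoint x₀ ∈ X \ Y, the homomorphism π₁(X \ Y, x₀) → π₁(X, x₀) induced by the inclusion X \ Y ↪ X is surjective. -/
/-!
The space `X = |K|` is strongly locally contractible, since a small ball around any point meets
`|K|` in a star-shaped set. Hence every point has an open neighbourhood `U` (a path component of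
the interior of a contractible neighbourhood) in which any two paths with the same endpoints are
homotopic in `X`, and `U \ Y`, being open and connected by hypothesis, is path-connected.
Subdivide a loop `γ` so that each piece lies in such a `U`. Since `X \ Y` is dense, each
subdivision point can be joined, inside the two adjacent sets, to a point off `Y`; consecutive
such points are then joined inside `U \ Y`. Piece by piece the new loop, which avoids `Y`, is
homotopic to `γ`.
-/

open CategoryTheory

/-- The homomorphism of fundamental groups induced by a continuous map `f` with `f x = y`. -/
noncomputable def inducedPi1 {X Y : Type} [TopologicalSpace X] [TopologicalSpace Y]
    (f : C(X, Y)) (x : X) (y : Y) (h : f x = y) :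
    FundamentalGroup X x →* FundamentalGroup Y y := by
  subst h
  exact (FundamentalGroupoid.fundamentalGroupoidFunctor.map
    (X := TopCat.of X) (Y := TopCat.of Y) (TopCat.ofHom f)).mapEnd ⟨x⟩

open Set Filter Topology Metric unitInterval

section PathHomotopy

variable {X : Type*} [TopologicalSpace X]

def Path.codRestrict {s : Set X} {x y : s} (γ : Path (x : X) y) (h : range γ ⊆ s) :
    Path x y where
  toFun t := ⟨γ t, h (mem_range_self t)⟩
  source' := Subtype.ext γ.source
  target' := Subtype.ext γ.target

@[simp]
theorem Path.map_codRestrict {s : Set X} {x y : s} (γ : Path (x : X) y) (h : range γ ⊆ s) :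
    (γ.codRestrict h).map continuous_subtype_val = γ :=
  rfl

def Set.PathsHomotopic (U : Set X) : Prop :=
  ∀ ⦃y z : X⦄ (p q : Path y z), range p ⊆ U → range q ⊆ U → p.Homotopic q

theorem IsSimplyConnected.pathsHomotopic_of_subset {s U : Set X} (hs : IsSimplyConnected s)
    (hUs : U ⊆ s) : U.PathsHomotopic := by
  intro x y p q hp hq
  have := hs.simplyConnectedSpace
  lift x to s using hUs (hp ⟨0, p.source⟩)
  lift y to s using hUs (hp ⟨1, p.target⟩)
  simpa using (SimplyConnectedSpace.paths_homotopic (p.codRestrict (hp.trans hUs))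
    (q.codRestrict (hq.trans hUs))).map ⟨Subtype.val, continuous_subtype_val⟩

theorem Path.range_trans_subset {x y z : X} {p : Path x y} {q : Path y z} {U : Set X}
    (hp : range p ⊆ U) (hq : range q ⊆ U) : range (p.trans q) ⊆ U :=
  (trans_range p q).trans_subset (union_subset hp hq)

theorem Dense.exists_path_range_subset [LocallyPathConnectedSpace X] {A U : Set X} (hA : Dense A)
    (hU : IsOpen U) {x : X} (hx : x ∈ U) : ∃ z ∈ A, ∃ η : Path x z, range η ⊆ U := by
  obtain ⟨z, ⟨η, hη⟩, hzA⟩ :=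
    hA.inter_open_nonempty _ (hU.pathComponentIn x) ⟨x, mem_pathComponentIn_self hx⟩
  exact ⟨z, hzA, η, range_subset_iff.2 hη⟩

/-- `k - 1` is truncated subtraction: for `k = 0` the path `η` has to stay in `V 0`. -/
theorem Path.exists_homotopic_subpath_trans_of_subdivision [LocallyPathConnectedSpace X]
    {A : Set X} (hA : Dense A) {a b : X} (γ : Path a b) (ha : a ∈ A) {t : ℕ → I}
    (ht0 : t 0 = 0) (ht : Monotone t) {V : ℕ → Set X} (hVo : ∀ k, IsOpen (V k))
    (hVA : ∀ k, IsPathConnected (V k ∩ A)) (hVhom : ∀ k, (V k).PathsHomotopic)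
    (hγV : ∀ k, Icc (t k) (t (k + 1)) ⊆ γ ⁻¹' V k) (k : ℕ) {z : X} (hz : z ∈ A)
    (η : Path (γ (t k)) z) (hη : range η ⊆ V (k - 1)) :
    ∃ δ : Path (γ 0) z, range δ ⊆ A ∧ δ.Homotopic ((γ.subpath 0 (t k)).trans η) := by
  have hnode : ∀ k, γ (t k) ∈ V (k - 1) ∩ V k := by
    rintro (_ | k)
    · exact ⟨hγV 0 ⟨le_rfl, ht (Nat.zero_le 1)⟩, hγV 0 ⟨le_rfl, ht (Nat.zero_le 1)⟩⟩
    · exact ⟨hγV k ⟨ht k.le_succ, le_rfl⟩, hγV (k + 1) ⟨le_rfl, ht (k + 1).le_succ⟩⟩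
  induction k generalizing z with
  | zero =>
    have hγ0 : γ 0 ∈ V 0 := by simpa [ht0] using (hnode 0).2
    obtain ⟨ω, hω⟩ :=
      (hVA 0).joinedIn (γ 0) ⟨hγ0, by simpa using ha⟩ z ⟨hη ⟨1, η.target⟩, hz⟩
    refine ⟨ω, range_subset_iff.2 fun s => (hω s).2,
      hVhom _ _ _ (range_subset_iff.2 fun s => (hω s).1) (range_trans_subset ?_ hη)⟩
    rw [range_subpath, ht0, uIcc_self, image_singleton]
    exact singleton_subset_iff.2 hγ0
  | succ k ih =>
    obtain ⟨y, hy, θ, hθ⟩ := hA.exists_path_range_subset ((hVo _).inter (hVo _)) (hnode k)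
    obtain ⟨δ, hδA, hδ⟩ := ih hy θ (hθ.trans inter_subset_left)
    obtain ⟨ω, hω⟩ :=
      (hVA k).joinedIn y ⟨(hθ ⟨1, θ.target⟩).2, hy⟩ z ⟨hη ⟨1, η.target⟩, hz⟩
    refine ⟨δ.trans ω, range_trans_subset hδA (range_subset_iff.2 fun s => (hω s).2), ?_⟩
    have hpiece : range (γ.subpath (t k) (t (k + 1))) ⊆ V k := by
      rw [range_subpath_of_le _ _ _ (ht k.le_succ)]
      exact image_subset_iff.2 (hγV k)
    have hlocal : (θ.trans ω).Homotopic ((γ.subpath (t k) (t (k + 1))).trans η) :=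
      hVhom _ _ _ (range_trans_subset (hθ.trans inter_subset_right)
        (range_subset_iff.2 fun s => (hω s).1)) (range_trans_subset hpiece hη)
    rw [← Homotopic.Quotient.eq] at hδ hlocal ⊢
    simp only [Homotopic.Quotient.mk_trans] at hδ hlocal ⊢
    rw [hδ, Homotopic.Quotient.trans_assoc, hlocal, ← Homotopic.Quotient.trans_assoc,
      ← Homotopic.Quotient.mk_trans,
      Homotopic.Quotient.eq.2 ⟨Homotopy.subpathTransSubpath γ _ _ _⟩]

theorem Path.exists_homotopic_range_subset_of_dense [LocallyPathConnectedSpace X]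
    {A : Set X} (hA : Dense A)
    (hcover : ∀ x, ∃ U, IsOpen U ∧ x ∈ U ∧ IsPathConnected (U ∩ A) ∧ U.PathsHomotopic)
    {a b : X} (γ : Path a b) (ha : a ∈ A) (hb : b ∈ A) :
    ∃ δ : Path a b, range δ ⊆ A ∧ δ.Homotopic γ := by
  choose U hUo hxU hUA hUhom using hcover
  obtain ⟨t, ht0, ht, ⟨n, htn⟩, hpiece⟩ :=
    exists_monotone_Icc_subset_open_cover_unitInterval
      (fun x => (hUo x).preimage γ.continuous) fun s _ => mem_iUnion.2 ⟨γ s, hxU _⟩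
  choose c hc using hpiece
  have htn : t (n + 1) = 1 := htn _ n.le_succ
  have hγ1 : γ 1 ∈ U (c n) := by simpa [htn] using hc n ⟨ht n.le_succ, le_rfl⟩
  obtain ⟨δ, hδA, hδ⟩ := γ.exists_homotopic_subpath_trans_of_subdivision hA ha ht0 ht
    (fun _ => hUo _) (fun _ => hUA _) (fun _ => hUhom _) hc (n + 1) (by simpa using hb)
    (γ.subpath (t (n + 1)) 1) (by simpa [htn] using hγ1)
  have hγ : ((γ.subpath 0 (t (n + 1))).trans (γ.subpath (t (n + 1)) 1)).Homotopic
      (γ.cast γ.source γ.target) := by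
    rw [← subpath_zero_one]
    exact ⟨Homotopy.subpathTransSubpath γ _ _ _⟩
  exact ⟨δ.cast γ.source.symm γ.target.symm, hδA,
    (hδ.trans hγ).pathCast γ.source.symm γ.target.symm⟩

theorem exists_isOpen_isPathConnected_inter_compl [StronglyLocallyContractibleSpace X]
    {Y : Set X} (hY : IsClosed Y)
    (hsep : ∀ U : Set X, IsOpen U → IsConnected U → IsConnected (U \ Y)) (x : X) :
    ∃ U, IsOpen U ∧ x ∈ U ∧ IsPathConnected (U ∩ Yᶜ) ∧ U.PathsHomotopic := by
  obtain ⟨S, ⟨hSx, _⟩, -⟩ := (contractible_basis x).mem_iff.1 univ_mem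
  have hS : IsSimplyConnected S := inferInstanceAs (SimplyConnectedSpace S)
  have hx : x ∈ interior S := mem_interior_iff_mem_nhds.2 hSx
  have hU : IsOpen (pathComponentIn (interior S) x) := isOpen_interior.pathComponentIn x
  have hUS : pathComponentIn (interior S) x ⊆ S := pathComponentIn_subset.trans interior_subset
  refine ⟨_, hU, mem_pathComponentIn_self hx, ?_, hS.pathsHomotopic_of_subset hUS⟩
  exact (hU.inter hY.isOpen_compl).isConnected_iff_isPathConnected.1
    (hsep _ hU (isPathConnected_pathComponentIn hx).isConnected)

theorem Path.exists_homotopic_range_subset_compl [StronglyLocallyContractibleSpace X]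
    {Y : Set X} (hY : IsClosed Y) (hdense : Dense Yᶜ)
    (hsep : ∀ U : Set X, IsOpen U → IsConnected U → IsConnected (U \ Y))
    {a b : X} (γ : Path a b) (ha : a ∉ Y) (hb : b ∉ Y) :
    ∃ δ : Path a b, range δ ⊆ Yᶜ ∧ δ.Homotopic γ :=
  γ.exists_homotopic_range_subset_of_dense hdense
    (exists_isOpen_isPathConnected_inter_compl hY hsep) ha hb

end PathHomotopy

theorem surjective_inducedPi1_subtypeVal {X : Type} [TopologicalSpace X] {A : Set X} (x₀ : A)
    (h : ∀ γ : Path (x₀ : X) x₀, ∃ δ : Path (x₀ : X) x₀, range δ ⊆ A ∧ δ.Homotopic γ) :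
    Function.Surjective
      (inducedPi1 ⟨Subtype.val, continuous_subtype_val⟩ x₀ (x₀ : X) rfl) := by
  intro g
  obtain ⟨γ, hγ⟩ := Quotient.exists_rep (FundamentalGroup.toPath (X := TopCat.of X) g)
  obtain ⟨δ, hδA, hδ⟩ := h γ
  refine ⟨FundamentalGroup.fromPath (X := TopCat.of A)
    (Path.Homotopic.Quotient.mk (δ.codRestrict hδA)), ?_⟩
  show Path.Homotopic.Quotient.mk ((δ.codRestrict hδA).map continuous_subtype_val) =
    FundamentalGroup.toPath (X := TopCat.of X) g
  rw [← hγ, Path.map_codRestrict]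
  exact Path.Homotopic.Quotient.eq.2 hδ

section NormedSpace

variable {E : Type*} [NormedAddCommGroup E] [NormedSpace ℝ E]

theorem contractibleSpace_ball_of_starConvex {S : Set E} {x : S} {ε : ℝ} (hε : 0 < ε)
    (h : StarConvex ℝ (x : E) (ball (x : E) ε ∩ S)) : ContractibleSpace (ball x ε) := by
  rw [(IsEmbedding.subtypeVal.homeomorphImage (ball x ε)).contractibleSpace_iff,
    Subtype.image_ball, ofPred_mem_eq]
  exact h.contractibleSpace ⟨x, mem_ball_self hε, x.2⟩

namespace Geometry.SimplicialComplex

variable {K : SimplicialComplex ℝ E}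

theorem isClosed_space (hfin : K.faces.Finite) : IsClosed K.space :=
  hfin.isClosed_biUnion fun s _ => s.finite_toSet.isClosed_convexHull (𝕜 := ℝ)

theorem eventually_starConvex_ball_inter_space (hfin : K.faces.Finite) (c : E) :
    ∀ᶠ ε in 𝓝[>] 0, StarConvex ℝ c (ball c ε ∩ K.space) := by
  have hnear : ∀ᶠ y in 𝓝 c, ∀ s ∈ K.faces,
      y ∈ convexHull ℝ (s : Set E) → c ∈ convexHull ℝ (s : Set E) := by
    refine hfin.eventually_all.2 fun s _ => ?_
    by_cases hc : c ∈ convexHull ℝ (s : Set E)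
    · exact .of_forall fun _ _ => hc
    · filter_upwards [s.finite_toSet.isClosed_convexHull (𝕜 := ℝ).isOpen_compl.mem_nhds hc]
        with y hy hys using absurd hys hy
  obtain ⟨ε₀, hε₀, hball⟩ := eventually_nhds_iff_ball.1 hnear
  filter_upwards [Ioc_mem_nhdsGT hε₀] with ε hε
  rintro y ⟨hyε, hyK⟩ a b ha hb hab
  obtain ⟨s, hs, hys⟩ := mem_space_iff.1 hyK
  have hcs := hball y (ball_subset_ball hε.2 hyε) s hs hys
  exact ⟨(convex_ball c ε).starConvex (mem_ball_self hε.1) hyε ha hb hab,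
    convexHull_subset_space hs (convex_convexHull ℝ _ hcs hys ha hb hab)⟩

theorem stronglyLocallyContractibleSpace_space (hfin : K.faces.Finite) :
    StronglyLocallyContractibleSpace K.space :=
  .of_bases
    (fun x => nhds_basis_ball.restrict fun _ hε =>
      let ⟨ε', hε', hε'ε⟩ := ((eventually_starConvex_ball_inter_space hfin (x : E)).and
        (Ioo_mem_nhdsGT hε)).exists
      ⟨ε', hε'ε.1, hε', ball_subset_ball hε'ε.2.le⟩)
    fun _ _ h => contractibleSpace_ball_of_starConvex h.1 h.2

end Geometry.SimplicialComplex

end NormedSpace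

theorem stmt10_general {E : Type} [NormedAddCommGroup E] [NormedSpace ℝ E]
    (K L : Geometry.SimplicialComplex ℝ E) (hfin : K.faces.Finite)
    (hsub : L.faces ⊆ K.faces)
    (hdense : Dense {p : K.space | (p : E) ∉ L.space})
    (hsep : ∀ U : Set K.space, IsOpen U → IsConnected U →
      IsConnected (U \ {p : K.space | (p : E) ∈ L.space}))
    (x₀ : {p : K.space | (p : E) ∉ L.space}) :
    Function.Surjective
      (inducedPi1 ⟨Subtype.val, continuous_subtype_val⟩ x₀ (x₀ : K.space) rfl) := by
  have := K.stronglyLocallyContractibleSpace_space hfin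
  have hY : IsClosed {p : K.space | (p : E) ∈ L.space} :=
    (L.isClosed_space (hfin.subset hsub)).preimage continuous_subtype_val
  exact surjective_inducedPi1_subtypeVal x₀ fun γ =>
    γ.exists_homotopic_range_subset_compl hY hdense hsep x₀.2 x₀.2

/-- Let `K` be a simplicial complex with finitely many faces in a
finite-dimensional real vector space, `L` a subcomplex, `X = |K|` and `Y = |L|`. If
`X \ Y` is dense in `X` and `Y` does not separate any connected open subset of `X`, then
for every basepoint `x₀ ∈ X \ Y` the inclusion `X \ Y ↪ X` is π₁-surjective. -/
theorem stmt10 {E : Type} [NormedAddCommGroup E] [NormedSpace ℝ E] [FiniteDimensional ℝ E]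
    (K L : Geometry.SimplicialComplex ℝ E) (hfin : K.faces.Finite)
    (hsub : L.faces ⊆ K.faces)
    (hdense : Dense {p : K.space | (p : E) ∉ L.space})
    (hsep : ∀ U : Set K.space, IsOpen U → IsConnected U →
      IsConnected (U \ {p : K.space | (p : E) ∈ L.space}))
    (x₀ : {p : K.space | (p : E) ∉ L.space}) :
    Function.Surjective
      (inducedPi1 ⟨Subtype.val, continuous_subtype_val⟩ x₀ (x₀ : K.space) rfl) :=
  stmt10_general K L hfin hsub hdense hsep x₀
end

section
/- Let G be a compact, connected, simply connected Lie group, k ≥ 1, and T a maximal torus of G. Then the continuous inclusion map T^k → Hom(ℤ^k,G), (t₁,…,t_k) ↦ (t₁,…,t_k), induces the trivial homomorphism π₁(T^k,(1,…,1)) → π₁(Hom(ℤ^k,G), 𝟙); that is, every loop in T^k based at (1,…,1) becomes nullhomotopic in Hom(ℤ^k,G). -/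
open scoped Manifold

/-- The space `Hom(ℤᵏ, G)` of commuting `k`-tuples in `G`, topologized as a subspace
of `Gᵏ`. -/
def commTuples (G : Type) [Group G] (k : ℕ) : Set (Fin k → G) :=
  {x | ∀ i j, x i * x j = x j * x i}

/-- The trivial tuple `𝟙 = (1, …, 1)`. -/
def trivTuple (G : Type) [Group G] (k : ℕ) : commTuples G k :=
  ⟨1, fun _ _ => rfl⟩

/-- A maximal torus of `G`: a compact, connected, commutative subgroup of `G` which is
maximal with respect to inclusion among such subgroups. -/
structure IsMaximalTorus (G : Type) [Group G] [TopologicalSpace G] (T : Subgroup G) : Prop where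
  isCompact : IsCompact (T : Set G)
  isConnected : IsConnected (T : Set G)
  comm : ∀ x ∈ T, ∀ y ∈ T, x * y = y * x
  maximal : ∀ S : Subgroup G, IsCompact (S : Set G) → IsConnected (S : Set G) →
      (∀ x ∈ S, ∀ y ∈ S, x * y = y * x) → T ≤ S → S = T

/-!
A loop in `Tᵏ` is homotopic to the concatenation of its coordinate loops, each of which runs in
a single factor of `Tᵏ` and is constant `1` in the others. Such a loop stays inside the image of
`G → Hom(ℤᵏ, G)`, `g ↦ (1, …, g, …, 1)`, which is defined on all of `G` because every element
commutes with `1`; as `G` is simply connected, the loop is nullhomotopic there.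
-/

namespace Path

theorem Homotopic.refl_of_eq_comp {Y Z : Type*} [TopologicalSpace Y] [TopologicalSpace Z]
    [SimplyConnectedSpace Y] (g : C(Y, Z)) {y : Y} {z : Z} (δ : Path y y) (γ : Path z z)
    (h : ∀ t, γ t = g (δ t)) : γ.Homotopic (Path.refl z) := by
  obtain rfl : g y = z := by simpa using (h 0).symm
  obtain rfl : γ = δ.map g.continuous := Path.ext (funext h)
  exact (SimplyConnectedSpace.paths_homotopic δ (Path.refl y)).map g

variable {ι : Type*} [DecidableEq ι] {X : ι → Type*} [∀ i, TopologicalSpace (X i)]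
  {x : ∀ i, X i}

def piSingle (i : ι) (p : Path (x i) (x i)) : Path x x :=
  Path.pi (Function.update (fun j => Path.refl (x j)) i p)

theorem piSingle_apply (i : ι) (p : Path (x i) (x i)) (t : unitInterval) :
    piSingle i p t = Function.update x i (p t) := by
  ext j
  rcases eq_or_ne j i with rfl | hji <;> simp [piSingle, *]

theorem Homotopic.pi_piSingle_trans (q : ∀ i, Path (x i) (x i)) (i : ι) :
    (Path.pi q).Homotopic
      ((piSingle i (q i)).trans (Path.pi (Function.update q i (Path.refl (x i))))) := by
  rw [piSingle, trans_pi_eq_pi_trans]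
  refine ⟨Homotopic.piHomotopy _ _ fun j => (?_ : Homotopic _ _).some⟩
  rcases eq_or_ne j i with rfl | hji
  · simpa using (Homotopic.trans_refl (q j)).symm
  · simpa [hji] using (Homotopic.refl_trans (q j)).symm

theorem Homotopic.map_refl_of_piSingle [Finite ι] {Z : Type*} [TopologicalSpace Z]
    {f : (∀ i, X i) → Z} (hf : Continuous f)
    (h : ∀ i (p : Path (x i) (x i)), ((piSingle i p).map hf).Homotopic (Path.refl (f x)))
    (γ : Path x x) : (γ.map hf).Homotopic (Path.refl (f x)) := by
  have := Fintype.ofFinite ι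
  suffices key : ∀ (s : Finset ι) (q : ∀ i, Path (x i) (x i)), (∀ i ∉ s, q i = Path.refl (x i)) →
      ((Path.pi q).map hf).Homotopic (Path.refl (f x)) from
    -- `γ` is definitionally `Path.pi` of its coordinate loops
    key Finset.univ (fun i => γ.map (continuous_apply i)) (by simp)
  intro s
  induction s using Finset.induction_on with
  | empty =>
    intro q hq
    obtain rfl : q = fun i => Path.refl (x i) := funext fun i => hq i (Finset.notMem_empty i)
    exact Homotopic.refl _
  | insert i s _ ih =>
    intro q hq
    have hrest : ((Path.pi (Function.update q i (Path.refl (x i)))).map hf).Homotopic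
        (Path.refl (f x)) := by
      refine ih _ fun j hj => ?_
      rcases eq_or_ne j i with rfl | hji
      · simp
      · simpa [hji] using hq j (by simp [hji, hj])
    calc Homotopic ((Path.pi q).map hf)
          (((piSingle i (q i)).trans (Path.pi (Function.update q i (Path.refl (x i))))).map hf) :=
          (pi_piSingle_trans q i).map ⟨f, hf⟩
      _ = ((piSingle i (q i)).map hf).trans
            ((Path.pi (Function.update q i (Path.refl (x i)))).map hf) := Path.map_trans _ _ _
      Homotopic _ ((Path.refl (f x)).trans (Path.refl (f x))) := (h i (q i)).hcomp hrest
      Homotopic _ (Path.refl (f x)) := Homotopic.trans_refl _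

end Path

def mulSingleTuple (G : Type) [TopologicalSpace G] [Group G] {k : ℕ} (i : Fin k) :
    C(G, commTuples G k) where
  toFun g := ⟨Pi.mulSingle i g, fun a b => by
    rcases eq_or_ne a i with rfl | hai <;> rcases eq_or_ne b a with rfl | hba <;>
      simp [Pi.mulSingle_apply, *]⟩
  continuous_toFun := (continuous_mulSingle (A := fun _ => G) i).subtype_mk _

theorem stmt13_general
    {G : Type} [TopologicalSpace G] [Group G] [SimplyConnectedSpace G] (k : ℕ)
    (T : Subgroup G) (hT : IsMaximalTorus G T) (γ : Path (1 : Fin k → T) 1) :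
    (γ.map (f := fun t : Fin k → T =>
        (⟨fun i => (t i : G), fun i j => hT.comm _ (t i).2 _ (t j).2⟩ : commTuples G k))
      (Continuous.subtype_mk
        (continuous_pi fun i => continuous_subtype_val.comp (continuous_apply i)) _)).Homotopic
    (Path.refl (trivTuple G k)) := by
  refine Path.Homotopic.map_refl_of_piSingle _ (fun i p => ?_) γ
  refine .refl_of_eq_comp (mulSingleTuple G i) (p.map continuous_subtype_val) _ fun t => ?_
  ext j
  rcases eq_or_ne j i with rfl | hji <;> simp [Path.piSingle_apply, mulSingleTuple, *]

/-- For a compact, connected, simply connected Lie group `G`, `k ≥ 1`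
and a maximal torus `T` of `G`, every loop in `Tᵏ` based at `(1,…,1)` becomes
nullhomotopic in `Hom(ℤᵏ,G)` under the inclusion `Tᵏ → Hom(ℤᵏ,G)`. -/
theorem stmt13 {E : Type} [NormedAddCommGroup E] [NormedSpace ℝ E] [FiniteDimensional ℝ E]
    {G : Type} [TopologicalSpace G] [ChartedSpace E G] [Group G] [IsTopologicalGroup G]
    [LieGroup 𝓘(ℝ, E) (⊤ : ℕ∞) G] [CompactSpace G] [ConnectedSpace G] [SimplyConnectedSpace G] (k : ℕ) (hk : 1 ≤ k)
    (T : Subgroup G) (hT : IsMaximalTorus G T) (γ : Path (1 : Fin k → T) 1) :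
    (γ.map (f := fun t : Fin k → T =>
        (⟨fun i => (t i : G), fun i j => hT.comm _ (t i).2 _ (t j).2⟩ : commTuples G k))
      (Continuous.subtype_mk
        (continuous_pi fun i => continuous_subtype_val.comp (continuous_apply i)) _)).Homotopic
    (Path.refl (trivTuple G k)) :=
  stmt13_general k T hT γ
end

section
/- Let G be a compact Lie group with identity component G₀, and let k ≥ 1. Then the inclusion Hom(ℤ^k,G₀) ↪ Hom(ℤ^k,G) induces an isomorphism of fundamental groups π₁(Hom(ℤ^k,G₀), 𝟙) → π₁(Hom(ℤ^k,G), 𝟙). -/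
open CategoryTheory
open scoped Manifold

/-! Since a manifold is locally connected, `G₀` is clopen in `G`, so `Hom(ℤᵏ, G₀)` is a clopen
subspace of `Hom(ℤᵏ, G)`. Loops at `𝟙` and their homotopies have connected domains, hence stay
inside that subspace, and lift uniquely to it. -/

open Topology Set

theorem IsClopen.univ_pi {ι : Type*} [Finite ι] {A : ι → Type*} [∀ i, TopologicalSpace (A i)]
    {U : ∀ i, Set (A i)} (hU : ∀ i, IsClopen (U i)) : IsClopen (univ.pi U) :=
  ⟨isClosed_set_pi fun i _ => (hU i).isClosed, isOpen_set_pi finite_univ fun i _ => (hU i).isOpen⟩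

section ClopenEmbedding

variable {X Y : Type*} [TopologicalSpace X] [TopologicalSpace Y] {f : C(X, Y)}

theorem ContinuousMap.exists_comp_eq_of_isClopen_range (hf : IsEmbedding f)
    (hrange : IsClopen (range f)) {Z : Type*} [TopologicalSpace Z] [PreconnectedSpace Z]
    (g : C(Z, Y)) {z₀ : Z} (hz₀ : g z₀ ∈ range f) : ∃ h : C(Z, X), f.comp h = g := by
  have hg : range g ⊆ range f :=
    (isPreconnected_range g.continuous).subset_isClopen hrange ⟨g z₀, mem_range_self z₀, hz₀⟩
  obtain ⟨h, hh⟩ := range_subset_range_iff_exists_comp.1 hg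
  have hcont : Continuous h := by rw [hf.continuous_iff, ← hh]; exact g.continuous
  exact ⟨⟨h, hcont⟩, ContinuousMap.ext fun z => (congrFun hh z).symm⟩

theorem Path.exists_map_eq_of_isClopen_range (hf : IsEmbedding f) (hrange : IsClopen (range f))
    {x y : X} (p : Path (f x) (f y)) : ∃ γ : Path x y, γ.map f.continuous = p := by
  obtain ⟨h, hh⟩ := ContinuousMap.exists_comp_eq_of_isClopen_range hf hrange p.toContinuousMap
    (z₀ := 0) ⟨x, p.source.symm⟩
  have hfh : ∀ t, f (h t) = p t := fun t => DFunLike.congr_fun hh t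
  refine ⟨⟨h, hf.injective ?_, hf.injective ?_⟩, Path.ext (funext hfh)⟩
  · simp [hfh]
  · simp [hfh]

theorem Path.Homotopic.of_map_of_isClopen_range (hf : IsEmbedding f)
    (hrange : IsClopen (range f)) {x y : X} {p q : Path x y}
    (hpq : (p.map f.continuous).Homotopic (q.map f.continuous)) : p.Homotopic q := by
  obtain ⟨H⟩ := hpq
  obtain ⟨K, hK⟩ := ContinuousMap.exists_comp_eq_of_isClopen_range hf hrange H.toContinuousMap
    (z₀ := (0, 0)) ⟨x, by simp⟩
  have hfK : ∀ z, f (K z) = H z := fun z => DFunLike.congr_fun hK z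
  refine ⟨⟨⟨K, fun t => hf.injective ?_, fun t => hf.injective ?_⟩, fun t s hs => hf.injective ?_⟩⟩
  · simp [hfK]
  · simp [hfK]
  · simpa [hfK] using H.eq_fst t hs

theorem FundamentalGroup.map_bijective_of_isClopen_range (hf : IsEmbedding f)
    (hrange : IsClopen (range f)) (x : X) : Function.Bijective (FundamentalGroup.map f x) := by
  constructor
  · rintro ⟨p⟩ ⟨q⟩ hpq
    exact Quotient.sound (Path.Homotopic.of_map_of_isClopen_range hf hrange (Quotient.exact hpq))
  · rintro ⟨p⟩
    obtain ⟨γ, rfl⟩ := Path.exists_map_eq_of_isClopen_range hf hrange p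
    exact ⟨⟦γ⟧, rfl⟩

end ClopenEmbedding

theorem stmt14_general {E : Type} [NormedAddCommGroup E] [NormedSpace ℝ E]
    {G : Type} [TopologicalSpace G] [ChartedSpace E G] [Group G] (k : ℕ) :
    Function.Bijective
      (inducedPi1
        ((⟨fun x => ⟨x.1, x.2.1⟩, continuous_subtype_val.subtype_mk _⟩ :
          C({x : Fin k → G | (∀ i j, x i * x j = x j * x i) ∧
              ∀ i, x i ∈ connectedComponent (1 : G)}, commTuples G k)))
        ⟨(1 : Fin k → G), fun _ _ => rfl, fun _ => mem_connectedComponent⟩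
        (trivTuple G k) rfl) := by
  have : LocallyConnectedSpace G := ChartedSpace.locallyConnectedSpace E G
  have hsub : {x : Fin k → G | (∀ i j, x i * x j = x j * x i) ∧
      ∀ i, x i ∈ connectedComponent (1 : G)} ⊆ commTuples G k := fun _ hx => hx.1
  have hrange : range (inclusion hsub) = Subtype.val ⁻¹' univ.pi fun _ => connectedComponent 1 := by
    ext y
    simp only [range_inclusion, mem_preimage, mem_univ_pi]
    exact and_iff_right y.2
  refine FundamentalGroup.map_bijective_of_isClopen_range
    (f := ⟨inclusion hsub, continuous_inclusion hsub⟩) (IsEmbedding.inclusion hsub) ?_ _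
  rw [ContinuousMap.coe_mk, hrange]
  exact (IsClopen.univ_pi fun _ => isClopen_connectedComponent).preimage continuous_subtype_val

/-- For a compact Lie group `G` with identity component `G₀` and
`k ≥ 1`, the inclusion `Hom(ℤᵏ,G₀) ↪ Hom(ℤᵏ,G)` induces an isomorphism on `π₁` at the
trivial tuple. -/
theorem stmt14 {E : Type} [NormedAddCommGroup E] [NormedSpace ℝ E] [FiniteDimensional ℝ E]
    {G : Type} [TopologicalSpace G] [ChartedSpace E G] [Group G] [IsTopologicalGroup G]
    [LieGroup 𝓘(ℝ, E) (⊤ : ℕ∞) G] [CompactSpace G] (k : ℕ) (hk : 1 ≤ k) :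
    Function.Bijective
      (inducedPi1
        ((⟨fun x => ⟨x.1, x.2.1⟩, continuous_subtype_val.subtype_mk _⟩ :
          C({x : Fin k → G | (∀ i j, x i * x j = x j * x i) ∧
              ∀ i, x i ∈ connectedComponent (1 : G)}, commTuples G k)))
        ⟨(1 : Fin k → G), fun _ _ => rfl, fun _ => mem_connectedComponent⟩
        (trivTuple G k) rfl) :=
  stmt14_general (E := E) k
end

section
/- Let p : G̃ → G be a surjective continuous homomorphism of compact connected Lie groups whose kernel K is finite and contained in the center of G̃, and let k ≥ 1. Then for every commuting k-tuple ρ = (x₁,…,x_k) ∈ Hom(ℤ^k,G̃), one has p_*(ρ) = (p(x₁),…,p(x_k)) ∈ Hom(ℤ^k,G)_𝟙 if and only if ρ ∈ Hom(ℤ^k,G̃)_𝟙; that is, p_*⁻¹(Hom(ℤ^k,G)_𝟙) = Hom(ℤ^k,G̃)_𝟙. -/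
/-!
Since the kernel is finite, `p` is a covering map. Lift a path from `p_*ρ` to `𝟙` coordinatewise,
starting at `ρ`. The commutator of two lifted coordinates is a continuous path in the discrete
kernel starting at `1`, so the lifts commute throughout: this is a path in `Hom(ℤᵏ, G̃)` from `ρ`
to a tuple in `Kᵏ`. As `K` is central and `G̃` is path connected, such a tuple is joined to `𝟙`
by moving one coordinate at a time.
-/

open CategoryTheory
open scoped Manifold

/-- The map `p₁ : Hom(ℤᵏ, G') → Hom(ℤᵏ, G)` induced by a homomorphism `p : G' → G`. -/
def pushMap {G' G : Type} [Group G'] [Group G] (p : G' →* G) (k : ℕ) :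
    commTuples G' k → commTuples G k := fun x =>
  ⟨fun i => p ((x : Fin k → G') i), fun i j => by
    rw [← map_mul, ← map_mul, x.2 i j]⟩

lemma continuous_pushMap {G' G : Type} [Group G'] [Group G] [TopologicalSpace G']
    [TopologicalSpace G] (p : G' →* G) (hp : Continuous p) (k : ℕ) :
    Continuous (pushMap p k) :=
  Continuous.subtype_mk
    (continuous_pi fun i => hp.comp ((continuous_apply i).comp continuous_subtype_val)) _

lemma pushMap_trivTuple {G' G : Type} [Group G'] [Group G] (p : G' →* G) (k : ℕ) :
    pushMap p k (trivTuple G' k) = trivTuple G k :=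
  Subtype.ext (funext fun _ => map_one p)

open scoped commutatorElement

lemma MonoidHom.isCoveringMap_of_finite_ker {G' G : Type*} [TopologicalSpace G'] [Group G']
    [IsTopologicalGroup G'] [T1Space G'] [CompactSpace G'] [TopologicalSpace G] [Group G]
    [T2Space G] (p : G' →* G) (hp : Continuous p) (hsurj : Function.Surjective p)
    (hfin : (p.ker : Set G').Finite) : IsCoveringMap p :=
  ((hp.isClosedMap.isQuotientMap hp hsurj).isQuotientCoveringMap_of_isDiscrete_ker_monoidHom
    hfin.isDiscrete).isCoveringMap

lemma IsCoveringMap.commute_of_commute_map {G' G X : Type*} [TopologicalSpace G'] [Group G']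
    [IsTopologicalGroup G'] [Group G] [TopologicalSpace G] {p : G' →* G} (cov : IsCoveringMap p)
    [TopologicalSpace X] [PreconnectedSpace X] {f g : X → G'} (hf : Continuous f)
    (hg : Continuous g) (hfg : ∀ t, Commute (p (f t)) (p (g t))) {t₀ : X}
    (h₀ : Commute (f t₀) (g t₀)) (t : X) : Commute (f t) (g t) := by
  have hmap : ∀ s, p ⁅f s, g s⁆ = 1 := fun s => by
    rw [map_commutatorElement, commutatorElement_eq_one_iff_mul_comm]; exact hfg s
  have := cov.const_of_comp (g := fun s => ⁅f s, g s⁆) (((hf.mul hg).mul hf.inv).mul hg.inv)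
    (fun a a' => by simp only [hmap]) t t₀
  rw [commute_iff_eq, ← commutatorElement_eq_one_iff_mul_comm] at h₀ ⊢
  exact this.trans h₀

lemma update_mem_commTuples {G : Type} [Group G] {k : ℕ} {y : Fin k → G}
    (hy : ∀ j, y j ∈ Subgroup.center G) (i : Fin k) (g : G) :
    Function.update y i g ∈ commTuples G k := by
  intro a b
  simp only [Function.update_apply]
  split_ifs <;> first
    | rfl
    | exact Subgroup.mem_center_iff.mp (hy _) _
    | exact (Subgroup.mem_center_iff.mp (hy _) _).symm

lemma joinedIn_commTuples_update {G : Type} [TopologicalSpace G] [Group G] {k : ℕ}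
    {y : Fin k → G} (hy : ∀ j, y j ∈ Subgroup.center G) (i : Fin k) {a b : G}
    (hab : Joined a b) :
    JoinedIn (commTuples G k) (Function.update y i a) (Function.update y i b) :=
  ⟨hab.somePath.map (by fun_prop), fun _ => update_mem_commTuples hy i _⟩

lemma joinedIn_commTuples_one_of_forall_mem_center {G : Type} [TopologicalSpace G] [Group G]
    [PathConnectedSpace G] {k : ℕ} {κ : Fin k → G} (hκ : ∀ i, κ i ∈ Subgroup.center G) :
    JoinedIn (commTuples G k) 1 κ := by
  classical
  suffices ∀ s : Finset (Fin k), JoinedIn (commTuples G k) 1 (s.piecewise κ 1) by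
    simpa using this Finset.univ
  intro s
  induction s using Finset.induction_on with
  | empty => rw [Finset.piecewise_empty]; exact JoinedIn.refl (trivTuple G k).2
  | insert i s hi ih =>
    have hcentral : ∀ j, s.piecewise κ 1 j ∈ Subgroup.center G := fun j => by
      by_cases hj : j ∈ s <;> simp [hj, hκ j]
    have hstep := joinedIn_commTuples_update hcentral i (PathConnectedSpace.joined 1 (κ i))
    rw [Function.update_eq_self_iff.mpr (by simp [hi]), ← Finset.piecewise_insert] at hstep
    exact ih.trans hstep

lemma IsCoveringMap.exists_joinedIn_commTuples_forall_mem_ker {G' G : Type}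
    [TopologicalSpace G'] [Group G'] [IsTopologicalGroup G'] [TopologicalSpace G] [Group G]
    {p : G' →* G} (cov : IsCoveringMap p) {k : ℕ} {x : Fin k → G'} (hx : x ∈ commTuples G' k)
    (h : JoinedIn (commTuples G k) (fun i => p (x i)) 1) :
    ∃ κ : Fin k → G', (∀ i, κ i ∈ p.ker) ∧ JoinedIn (commTuples G' k) x κ := by
  obtain ⟨Γ, hΓ⟩ := h
  let γ (i : Fin k) : C(unitInterval, G) := ⟨fun t => Γ t i, by fun_prop⟩
  have hγ₀ (i : Fin k) : γ i 0 = p (x i) := congrFun Γ.source i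
  let ℓ (i : Fin k) : C(unitInterval, G') := cov.liftPath (γ i) (x i) (hγ₀ i)
  have hℓ (i : Fin k) (t : unitInterval) : p (ℓ i t) = Γ t i :=
    congrFun (cov.liftPath_lifts (γ i) (x i) (hγ₀ i)) t
  have hℓ₀ (i : Fin k) : ℓ i 0 = x i := cov.liftPath_zero (γ i) (x i) (hγ₀ i)
  have hcomm (t : unitInterval) : (fun i => ℓ i t) ∈ commTuples G' k := fun i j =>
    cov.commute_of_commute_map (ℓ i).continuous (ℓ j).continuous
      (fun s => by rw [hℓ, hℓ]; exact hΓ s i j) (t₀ := 0) (by rw [hℓ₀, hℓ₀]; exact hx i j) t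
  refine ⟨fun i => ℓ i 1, fun i => ?_, Path.pi fun i => ⟨ℓ i, hℓ₀ i, rfl⟩, hcomm⟩
  rw [MonoidHom.mem_ker, hℓ, Γ.target]
  rfl

theorem stmt15_general {E₁ : Type} [NormedAddCommGroup E₁] [NormedSpace ℝ E₁]
    {G' : Type} [TopologicalSpace G'] [ChartedSpace E₁ G'] [Group G'] [IsTopologicalGroup G']
    [CompactSpace G'] [ConnectedSpace G']
    {E₂ : Type} [NormedAddCommGroup E₂]
    {G : Type} [TopologicalSpace G] [ChartedSpace E₂ G] [Group G] [IsTopologicalGroup G]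
    (p : G' →* G) (hp : Continuous p)
    (hsurj : Function.Surjective p) (hfin : (p.ker : Set G').Finite)
    (hcent : p.ker ≤ Subgroup.center G') (k : ℕ) (x : commTuples G' k) :
    pushMap p k x ∈ pathComponent (trivTuple G k) ↔
      x ∈ pathComponent (trivTuple G' k) := by
  have : T1Space G' := ChartedSpace.t1Space E₁ G'
  have : T1Space G := ChartedSpace.t1Space E₂ G
  have : LocallyPathConnectedSpace G' := ChartedSpace.locallyPathConnectedSpace E₁ G'
  have : PathConnectedSpace G' := pathConnectedSpace_iff_connectedSpace.mpr ‹_›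
  have cov := p.isCoveringMap_of_finite_ker hp hsurj hfin
  rw [mem_pathComponent_iff, mem_pathComponent_iff]
  refine ⟨fun h => ?_, fun h => by
    simpa only [pushMap_trivTuple] using h.map (continuous_pushMap p hp k)⟩
  obtain ⟨κ, hκ, hxκ⟩ :=
    cov.exists_joinedIn_commTuples_forall_mem_ker x.2 ((joinedIn_iff_joined _ _).mpr h.symm)
  exact ((joinedIn_commTuples_one_of_forall_mem_center fun i => hcent (hκ i)).trans
    hxκ.symm).joined_subtype

/-- For a surjective continuous homomorphism `p : G' → G` of compact
connected Lie groups with finite central kernel, `p₁⁻¹(Hom(ℤᵏ,G)_𝟙) = Hom(ℤᵏ,G')_𝟙`. -/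
theorem stmt15 {E₁ : Type} [NormedAddCommGroup E₁] [NormedSpace ℝ E₁] [FiniteDimensional ℝ E₁]
    {G' : Type} [TopologicalSpace G'] [ChartedSpace E₁ G'] [Group G'] [IsTopologicalGroup G']
    [LieGroup 𝓘(ℝ, E₁) (⊤ : ℕ∞) G'] [CompactSpace G'] [ConnectedSpace G']
    {E₂ : Type} [NormedAddCommGroup E₂] [NormedSpace ℝ E₂] [FiniteDimensional ℝ E₂]
    {G : Type} [TopologicalSpace G] [ChartedSpace E₂ G] [Group G] [IsTopologicalGroup G]
    [LieGroup 𝓘(ℝ, E₂) (⊤ : ℕ∞) G] [CompactSpace G] [ConnectedSpace G] (p : G' →* G) (hp : Continuous p)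
    (hsurj : Function.Surjective p) (hfin : (p.ker : Set G').Finite)
    (hcent : p.ker ≤ Subgroup.center G') (k : ℕ) (hk : 1 ≤ k) (x : commTuples G' k) :
    pushMap p k x ∈ pathComponent (trivTuple G k) ↔
      x ∈ pathComponent (trivTuple G' k) :=
  stmt15_general (E₁ := E₁) (E₂ := E₂) p hp hsurj hfin hcent k x
end

section
/- Let G be a compact Lie group, K a finite subgroup of the center of G, and k ≥ 1. Let B_k(G,K) = {(x₁,…,x_k) ∈ G^k : x_i x_j x_i⁻¹ x_j⁻¹ ∈ K for all i,j} with the subspace topology from G^k, and give the quotient group G/K the quotient topology. Then the map B_k(G,K) → Hom(ℤ^k, G/K), (x₁,…,x_k) ↦ (x₁K,…,x_kK), is a surjective covering map, and any two points of B_k(G,K) in the same fiber differ by componentwise multiplication by an element of K^k. -/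
open CategoryTheory
open scoped Manifold
open scoped commutatorElement

/-- The space `Bₖ(G,K)` of `K`-almost commuting `k`-tuples in `G`. -/
def almostCommTuples (G : Type) [Group G] (K : Subgroup G) (k : ℕ) : Set (Fin k → G) :=
  {x | ∀ i j, x i * x j * (x i)⁻¹ * (x j)⁻¹ ∈ K}

/-- The map `Bₖ(G,K) → Hom(ℤᵏ, G/K)`, `(x₁,…,xₖ) ↦ (x₁K,…,xₖK)`. -/
def acQuotMap (G : Type) [Group G] (K : Subgroup G) [K.Normal] (k : ℕ) :
    almostCommTuples G K k → commTuples (G ⧸ K) k := fun x =>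
  ⟨fun i => (((x : Fin k → G) i : G) : G ⧸ K), fun i j => by
    have h1 : ⁅(((x : Fin k → G) i : G) : G ⧸ K), (((x : Fin k → G) j : G) : G ⧸ K)⁆ = 1 := by
      show ⁅QuotientGroup.mk' K ((x : Fin k → G) i), QuotientGroup.mk' K ((x : Fin k → G) j)⁆ = 1
      rw [← map_commutatorElement]
      exact (QuotientGroup.eq_one_iff _).mpr (x.2 i j)
    exact commutatorElement_eq_one_iff_commute.mp h1⟩

/-! The coordinatewise quotient map `Gᵏ → (G/K)ᵏ` is a surjective group homomorphism and an
open quotient map whose kernel `Kᵏ` is finite, hence discrete (`G` is T₁, being locally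
Euclidean), so it is a covering map. Since `K` is normal, a tuple is `K`-almost commuting exactly
when its image commutes, so `Bₖ(G,K)` is the full preimage of `Hom(ℤᵏ, G/K)` and `acQuotMap` is
the restriction of that covering map to it. -/

theorem commutatorElement_mem_iff_commute_mk {G : Type*} [Group G] (K : Subgroup G) [K.Normal]
    (a b : G) : a * b * a⁻¹ * b⁻¹ ∈ K ↔ Commute (a : G ⧸ K) (b : G ⧸ K) := by
  rw [← QuotientGroup.eq_one_iff, ← commutatorElement_eq_one_iff_commute, commutatorElement_def]
  rfl

theorem almostCommTuples_eq_preimage {G : Type} [Group G] (K : Subgroup G) [K.Normal] (k : ℕ) :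
    almostCommTuples G K k =
      Pi.map (fun _ => (QuotientGroup.mk : G → G ⧸ K)) ⁻¹' commTuples (G ⧸ K) k := by
  ext x
  exact forall₂_congr fun i j => commutatorElement_mem_iff_commute_mk K (x i) (x j)

theorem acQuotMap_eq_restrictPreimage {G : Type} [TopologicalSpace G] [Group G] (K : Subgroup G)
    [K.Normal] (k : ℕ) :
    acQuotMap G K k = (commTuples (G ⧸ K) k).restrictPreimage
      (Pi.map fun _ => (QuotientGroup.mk : G → G ⧸ K)) ∘
        Homeomorph.setCongr (almostCommTuples_eq_preimage K k) :=
  rfl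

theorem isCoveringMap_piMap_quotientGroupMk {ι G : Type*} [Finite ι] [TopologicalSpace G]
    [Group G] [IsTopologicalGroup G] [T1Space G] (K : Subgroup G) [K.Normal]
    (hK : (K : Set G).Finite) :
    IsCoveringMap (Pi.map fun _ : ι => (QuotientGroup.mk : G → G ⧸ K)) := by
  let f : (ι → G) →* (ι → G ⧸ K) := (QuotientGroup.mk' K).compLeft ι
  have hf : Topology.IsQuotientMap f :=
    (IsOpenQuotientMap.piMap fun _ => QuotientGroup.isOpenQuotientMap_mk).isQuotientMap
  have hker : (f.ker : Set (ι → G)) = {x | ∀ i, x i ∈ K} := by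
    ext x
    simp [f, funext_iff]
  have hdisc : IsDiscrete (f.ker : Set (ι → G)) :=
    hker ▸ (Set.Finite.pi' fun _ => hK).isDiscrete
  exact (hf.isQuotientCoveringMap_of_isDiscrete_ker_monoidHom hdisc).isCoveringMap

theorem isCoveringMap_acQuotMap {G : Type} [TopologicalSpace G] [Group G] [IsTopologicalGroup G]
    [T1Space G] (K : Subgroup G) [K.Normal] (hK : (K : Set G).Finite) (k : ℕ) :
    IsCoveringMap (acQuotMap G K k) := by
  rw [acQuotMap_eq_restrictPreimage]
  exact ((isCoveringMap_piMap_quotientGroupMk K hK).restrictPreimage _).comp_homeomorph _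

theorem acQuotMap_surjective {G : Type} [TopologicalSpace G] [Group G] (K : Subgroup G)
    [K.Normal] (k : ℕ) : Function.Surjective (acQuotMap G K k) := by
  rw [acQuotMap_eq_restrictPreimage]
  exact ((Function.Surjective.piMap fun _ => QuotientGroup.mk_surjective).restrictPreimage
    _).comp (Homeomorph.surjective _)

theorem exists_mem_mul_of_acQuotMap_eq {G : Type} [Group G] (K : Subgroup G) [K.Normal] (k : ℕ)
    {x y : almostCommTuples G K k} (h : acQuotMap G K k x = acQuotMap G K k y) :
    ∃ c : Fin k → G, (∀ i, c i ∈ K) ∧ ∀ i, (y : Fin k → G) i = c i * (x : Fin k → G) i := by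
  refine ⟨fun i => (y : Fin k → G) i * ((x : Fin k → G) i)⁻¹, fun i => ?_, fun i => by group⟩
  have hxy : ((x : Fin k → G) i)⁻¹ * (y : Fin k → G) i ∈ K :=
    QuotientGroup.eq.mp (congrArg (fun q : commTuples (G ⧸ K) k => (q : Fin k → G ⧸ K) i) h)
  exact Subgroup.Normal.mem_comm inferInstance hxy

/-- For a compact Lie group `G`, a finite subgroup `K` of the center of
`G` and `k ≥ 1`, the map `Bₖ(G,K) → Hom(ℤᵏ,G/K)` is a surjective covering map, and
points in the same fiber differ by componentwise multiplication by an element of `Kᵏ`. -/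
theorem stmt18 {E : Type} [NormedAddCommGroup E]
    {G : Type} [TopologicalSpace G] [ChartedSpace E G] [Group G] [IsTopologicalGroup G]
    (K : Subgroup G) (hfin : (K : Set G).Finite)
    (hcent : K ≤ Subgroup.center G) (k : ℕ) :
    letI : K.Normal := ⟨fun n hn g => by
      rw [Subgroup.mem_center_iff.mp (hcent hn) g, mul_inv_cancel_right]; exact hn⟩
    IsCoveringMap (acQuotMap G K k) ∧
    Function.Surjective (acQuotMap G K k) ∧
    ∀ x y : almostCommTuples G K k, acQuotMap G K k x = acQuotMap G K k y →
      ∃ c : Fin k → G, (∀ i, c i ∈ K) ∧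
        ∀ i, ((y : Fin k → G) i) = c i * ((x : Fin k → G) i) := by
  let : K.Normal := ⟨fun n hn g => by
    rw [Subgroup.mem_center_iff.mp (hcent hn) g, mul_inv_cancel_right]; exact hn⟩
  have : T1Space G := ChartedSpace.t1Space E G
  exact ⟨isCoveringMap_acQuotMap K hfin k, acQuotMap_surjective K k,
    fun _ _ => exists_mem_mul_of_acQuotMap_eq K k⟩
end
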